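/- Let P = {⟨x⟩_n} be the sequence of rising factorials, associated with the delta series f(t) = 1 - e^{-t} (so f̄(t) = -log(1-t) and e^{f̄(t)} - 1 = t/(1-t)). Then S_2(n,k;f) = L(n,k) and S_1(n,k;f) = (-1)^{n-k} L(n,k) for all n ≥ k ≥ 0, where L(n,k) are the unsigned Lah numbers. -/

import Mathlib

open PowerSeries Finset Nat

/-- Composition `f(g(t))` of formal power series (intended for `g` with zero
constant term, in which case `coeff n (g^k) = 0` for `k > n` and the truncated
sum below is the full composition). -/
noncomputable def comp {K : Type*} [CommRing K] (f g : PowerSeries K) : PowerSeries K :=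
  PowerSeries.mk fun n =>
    ∑ k ∈ Finset.range (n + 1), (PowerSeries.coeff (R := K) k f) * (PowerSeries.coeff (R := K) n (g ^ k))

/-- The unsigned Lah numbers `L(n,k) = (n!/k!) C(n-1,k-1)`, with `L(0,0) = 1`
and `L(n,0) = 0` for `n ≥ 1`. -/
noncomputable def lah (n k : ℕ) : ℚ :=
  if k = 0 then (if n = 0 then 1 else 0)
  else (n ! : ℚ) / (k ! : ℚ) * ((n - 1).choose (k - 1) : ℚ)

noncomputable def myG : PowerSeries ℚ := PowerSeries.mk fun m => if m = 0 then (0 : ℚ) else 1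

lemma sum_Ico_chooseQ {k n : ℕ} (hk : 1 ≤ k) (hn : k < n) :
    ∑ i ∈ Finset.Ico k n, (((i-1).choose (k-1) : ℕ) : ℚ) = (((n-1).choose k : ℕ) : ℚ) := by
  have hnat : ∑ i ∈ Finset.Ico k n, (i-1).choose (k-1) = (n-1).choose k := by
    have h1 : Finset.Ico k n = Finset.Icc k (n-1) := by
      rw [← Finset.Ico_add_one_right_eq_Icc]; congr 1; omega
    have h2 : Finset.Icc k (n-1) = Finset.map (addRightEmbedding 1) (Finset.Icc (k-1) (n-2)) := by
      rw [Finset.map_add_right_Icc]; congr 1 <;> omega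
    rw [h1, h2, Finset.sum_map]
    have : ∀ m ∈ Finset.Icc (k-1) (n-2),
        ((addRightEmbedding 1) m - 1).choose (k-1) = m.choose (k-1) := by
      intro m _; simp [addRightEmbedding]
    rw [Finset.sum_congr rfl this, Nat.sum_Icc_choose]
    congr 1 <;> omega
  rw [← Nat.cast_sum, hnat]

lemma coeff_myG_pow (k : ℕ) (hk : 1 ≤ k) (n : ℕ) :
    PowerSeries.coeff (R := ℚ) n (myG ^ k) = if k ≤ n then (((n-1).choose (k-1) : ℕ) : ℚ) else 0 := by
  induction k, hk using Nat.le_induction generalizing n with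
  | base =>
    simp only [pow_one, myG, coeff_mk]
    rcases Nat.eq_zero_or_pos n with h | h
    · simp [h]
    · have h1 : n ≠ 0 := by omega
      simp [h1, Nat.one_le_iff_ne_zero.mpr h1]
  | succ k hk ih =>
    rw [pow_succ, PowerSeries.coeff_mul, Finset.Nat.sum_antidiagonal_eq_sum_range_succ_mk]
    have hcong : ∀ i ∈ Finset.range (n+1),
        PowerSeries.coeff (R := ℚ) i (myG ^ k) * PowerSeries.coeff (R := ℚ) (n - i) myG
        = if i ∈ Finset.Ico k n then (((i-1).choose (k-1) : ℕ) : ℚ) else 0 := by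
      intro i hi
      rw [ih i]
      simp only [Finset.mem_range] at hi
      simp only [Finset.mem_Ico]
      by_cases h1 : k ≤ i
      · by_cases h2 : i < n
        · have h3 : n - i ≠ 0 := Nat.sub_ne_zero_of_lt h2
          simp [myG, h1, h2, h3]
        · have h3 : n - i = 0 := by omega
          simp [myG, h1, h2, h3]
      · simp [h1]
    rw [Finset.sum_congr rfl hcong, Finset.sum_ite_mem]
    have hinter : Finset.range (n+1) ∩ Finset.Ico k n = Finset.Ico k n := by
      apply Finset.inter_eq_right.mpr
      intro i hi; simp only [Finset.mem_Ico] at hi; simp only [Finset.mem_range]; omega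
    rw [hinter]
    by_cases h : k + 1 ≤ n
    · rw [if_pos h, sum_Ico_chooseQ hk (by omega)]
      simp
    · rw [if_neg h]
      have : Finset.Ico k n = ∅ := by
        apply Finset.Ico_eq_empty; omega
      simp [this]

lemma altsumQ (m : ℕ) (hm : 1 ≤ m) :
    ∑ i ∈ Finset.range m, (-1:ℚ)^i * ((m.choose i : ℕ) : ℚ) = (-1:ℚ)^(m+1) := by
  have hfull : ∑ i ∈ Finset.range (m+1), (-1:ℚ)^i * ((m.choose i : ℕ) : ℚ) = 0 := by
    have h := Int.alternating_sum_range_choose_of_ne (n := m) (by omega)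
    have h2 : ((∑ i ∈ Finset.range (m + 1), ((-1) ^ i * m.choose i : ℤ) : ℤ) : ℚ) = 0 := by
      rw [h]; norm_num
    push_cast at h2
    exact h2
  rw [Finset.sum_range_succ] at hfull
  have h3 : ((m.choose m : ℕ) : ℚ) = 1 := by simp
  rw [h3, mul_one] at hfull
  have : (-1:ℚ)^(m+1) = -(-1:ℚ)^m := by rw [pow_succ]; ring
  rw [this]; linarith

/-- For the delta series `f(t) = 1 - e^{-t}` (associated to the rising
factorials) with `f̄(t) = -log(1-t)`, so that `e^{f̄(t)} - 1 = t/(1-t)` with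
compositional inverse `t/(1+t)`, the associated Stirling numbers satisfy
`S_2(n,k;f) = L(n,k)` and `S_1(n,k;f) = (-1)^{n-k} L(n,k)` for `n ≥ k ≥ 0`. -/
theorem stirling_risingFactorial (f fbar : PowerSeries ℚ)
    (hf : f = 1 - comp (PowerSeries.exp ℚ) (-PowerSeries.X))
    (hinv : comp f fbar = PowerSeries.X ∧ comp fbar f = PowerSeries.X)
    (g : PowerSeries ℚ)
    (hg : g = comp (PowerSeries.exp ℚ) fbar - 1)
    (hgexp : g = PowerSeries.mk fun m => if m = 0 then (0 : ℚ) else 1)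
    (ebar : PowerSeries ℚ)
    (hebar : comp g ebar = PowerSeries.X ∧ comp ebar g = PowerSeries.X)
    (S1 S2 : ℕ → ℕ → ℚ)
    (hS2 : ∀ k n : ℕ, (k ! : ℚ)⁻¹ * PowerSeries.coeff (R := ℚ) n (g ^ k)
      = S2 n k / (n ! : ℚ))
    (hS1 : ∀ k n : ℕ, (k ! : ℚ)⁻¹ * PowerSeries.coeff (R := ℚ) n (ebar ^ k)
      = S1 n k / (n ! : ℚ)) :
    ∀ n k : ℕ, k ≤ n →
      S2 n k = lah n k ∧ S1 n k = (-1 : ℚ) ^ (n - k) * lah n k := by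
  have hGg : g = myG := hgexp
  -- the composition identity, coefficientwise
  have hcomp : ∀ n, ∑ k ∈ Finset.range (n+1),
      PowerSeries.coeff (R := ℚ) k ebar * PowerSeries.coeff (R := ℚ) n (g ^ k)
      = PowerSeries.coeff (R := ℚ) n (PowerSeries.X : PowerSeries ℚ) := by
    intro n
    rw [← hebar.2]
    simp [comp, coeff_mk]
  -- coefficients of ebar
  have hE : ∀ n, PowerSeries.coeff (R := ℚ) n ebar = if n = 0 then 0 else (-1:ℚ)^(n+1) := by
    intro n
    induction n using Nat.strong_induction_on with
    | _ n ih =>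
      have hc := hcomp n
      rcases Nat.eq_zero_or_pos n with h0 | h0
      · subst h0
        norm_num [PowerSeries.coeff_one, PowerSeries.coeff_X] at hc
        simp [hc]
      · obtain ⟨m, rfl⟩ : ∃ m, n = m + 1 := ⟨n - 1, by omega⟩
        rw [Finset.sum_range_succ] at hc
        have hlast : PowerSeries.coeff (R := ℚ) (m+1) (g ^ (m+1)) = 1 := by
          rw [hGg, coeff_myG_pow (m+1) (by omega) (m+1), if_pos le_rfl]
          simp
        rw [hlast, mul_one] at hc
        have hterms : ∀ i ∈ Finset.range (m+1),
            PowerSeries.coeff (R := ℚ) i ebar * PowerSeries.coeff (R := ℚ) (m+1) (g ^ i)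
            = if i = 0 then 0 else (-1:ℚ)^(i+1) * ((m.choose (i-1) : ℕ) : ℚ) := by
          intro i hi
          simp only [Finset.mem_range] at hi
          rw [ih i hi]
          by_cases hiz : i = 0
          · subst hiz; simp [hGg, myG]
          · have h1 : 1 ≤ i := by omega
            rw [hGg, coeff_myG_pow i h1 (m+1), if_pos (by omega : i ≤ m+1), if_neg hiz,
              if_neg hiz]
            simp
        rw [Finset.sum_congr rfl hterms] at hc
        rw [PowerSeries.coeff_X] at hc
        rcases Nat.eq_zero_or_pos m with hm0 | hm0
        · subst hm0
          simp only [Finset.range_one, Finset.sum_singleton, if_pos rfl] at hc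
          norm_num at hc ⊢
          linarith
        · -- m ≥ 1, so n = m+1 ≥ 2
          have hsum : ∑ i ∈ Finset.range (m+1),
              (if i = 0 then (0:ℚ) else (-1:ℚ)^(i+1) * ((m.choose (i-1) : ℕ) : ℚ))
              = (-1:ℚ)^(m+1) := by
            rw [Finset.sum_range_succ']
            have hterm2 : ∀ i ∈ Finset.range m,
                (if i + 1 = 0 then (0:ℚ) else (-1:ℚ)^(i+1+1) * ((m.choose (i+1-1) : ℕ) : ℚ))
                = (-1:ℚ)^i * ((m.choose i : ℕ) : ℚ) := by
              intro i _
              rw [if_neg (by omega)]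
              have hp : (-1:ℚ)^(i+1+1) = (-1:ℚ)^i := by
                rw [pow_succ, pow_succ]; ring
              rw [hp]
              norm_num
            rw [Finset.sum_congr rfl hterm2]
            simpa using altsumQ m hm0
          rw [hsum, if_neg (by omega : ¬ m + 1 = 1)] at hc
          rw [if_neg (by omega : ¬ m + 1 = 0)]
          have : (-1:ℚ)^(m+1+1) = -(-1:ℚ)^(m+1) := by rw [pow_succ]; ring
          rw [this]
          linarith
  -- ebar equals -(rescale (-1) myG)
  have hEeq : ebar = -(PowerSeries.rescale (-1) myG) := by
    ext n
    rw [hE n]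
    rw [map_neg, PowerSeries.coeff_rescale]
    simp only [myG, coeff_mk]
    by_cases hn : n = 0
    · simp [hn]
    · rw [if_neg hn, if_neg hn, mul_one, pow_succ]
      ring
  have hcoeffE : ∀ n k : ℕ, PowerSeries.coeff (R := ℚ) n (ebar ^ k)
      = (-1:ℚ)^(n+k) * PowerSeries.coeff (R := ℚ) n (myG ^ k) := by
    intro n k
    rw [hEeq, neg_pow]
    have h1 : ((-1 : ℚ⟦X⟧))^k = PowerSeries.C (R := ℚ) ((-1:ℚ)^k) := by
      rw [map_pow, map_neg, map_one]
    rw [h1, PowerSeries.coeff_C_mul, ← map_pow, PowerSeries.coeff_rescale]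
    rw [pow_add]; ring
  -- final assembly
  intro n k hkn
  have hnfac : ((n ! : ℕ) : ℚ) ≠ 0 := by exact_mod_cast Nat.factorial_ne_zero n
  have hkfac : ((k ! : ℕ) : ℚ) ≠ 0 := by exact_mod_cast Nat.factorial_ne_zero k
  have h2 : S2 n k = ((k ! : ℚ)⁻¹ * PowerSeries.coeff (R := ℚ) n (g ^ k)) * (n ! : ℚ) :=
    (div_eq_iff hnfac).mp (hS2 k n).symm
  have h1 : S1 n k = ((k ! : ℚ)⁻¹ * PowerSeries.coeff (R := ℚ) n (ebar ^ k)) * (n ! : ℚ) :=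
    (div_eq_iff hnfac).mp (hS1 k n).symm
  by_cases hk0 : k = 0
  · subst hk0
    rw [hcoeffE] at h1
    simp only [pow_zero, PowerSeries.coeff_one] at h2 h1
    by_cases hn0 : n = 0
    · subst hn0
      constructor
      · rw [h2]; simp [lah]
      · rw [h1]; simp [lah]
    · constructor
      · rw [h2]; simp [lah, hn0]
      · rw [h1]; simp [lah, hn0]
  · have hk1 : 1 ≤ k := by omega
    have hG := coeff_myG_pow k hk1 n
    rw [if_pos hkn] at hG
    have hsign : (-1:ℚ)^(n+k) = (-1:ℚ)^(n-k) := by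
      rw [show n + k = (n-k) + 2*k by omega, pow_add, pow_mul]
      norm_num
    constructor
    · rw [h2, hGg, hG, lah, if_neg hk0]
      field_simp
    · rw [h1, hcoeffE, hG, hsign, lah, if_neg hk0]
      field_simp
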